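/- arXiv:1002.0434 — 3 statements merged into one kernel-verified Lean document; each statement's English description precedes it below -/
import Mathlib

section
/- For natural transformations between tensor power functors over a field k: Hom(T_n, T_m) = 0 if n ≠ m, and End(T_n) is isomorphic as a ring to the group algebra k(Σ_n), where T_n(V) = V^{⊗n} and a permutation σ ∈ Σ_n acts on V^{⊗n} by permuting tensor factors. -/
open scoped TensorProduct

/-- The action of a permutation `σ ∈ Σ_n` on the tensor power `V^{⊗n}`, permuting the tensor
factors. -/
noncomputable def permT (k : Type) [Field k] (n : ℕ) (V : Type) [AddCommGroup V] [Module k V]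
    (σ : Equiv.Perm (Fin n)) : (⨂[k] (i : Fin n), V) →ₗ[k] ⨂[k] (i : Fin n), V :=
  (PiTensorProduct.reindex k (fun _ : Fin n => V) σ).toLinearMap

/-- The action of an element of the group algebra `k(Σ_n)` on `V^{⊗n}`, extending `permT`
linearly. -/
noncomputable def permAct (k : Type) [Field k] (n : ℕ) (V : Type) [AddCommGroup V] [Module k V]
    (a : MonoidAlgebra k (Equiv.Perm (Fin n))) :
    (⨂[k] (i : Fin n), V) →ₗ[k] ⨂[k] (i : Fin n), V :=
  a.coeff.sum fun σ c => c • permT k n V σ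

/-!
A natural transformation `η : T_n → T_m` is determined by `x = η (e₁ ⊗ ⋯ ⊗ eₙ) ∈ (kⁿ)^{⊗m}`,
since every pure tensor `v₁ ⊗ ⋯ ⊗ vₙ` is the image of `e₁ ⊗ ⋯ ⊗ eₙ` under `eᵢ ↦ vᵢ`. Writing
`x = ∑_c x_c • e_{c 1} ⊗ ⋯ ⊗ e_{c m}` over `c : Fin m → Fin n`, naturality gives
`η (v₁ ⊗ ⋯ ⊗ vₙ) = ∑_c x_c • v_{c 1} ⊗ ⋯ ⊗ v_{c m}`. Naturality under the projection killing `e_j`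
forces `x_c = 0` when `j ∉ range c`, and additivity in the `j`-th factor, tested against an extra
basis vector, forces `x_c = 0` when `c` hits `j` twice. Hence only bijections `c` survive: none
when `n ≠ m`, and for `n = m` the surviving coefficients form the element of `k[Σₙ]` acting as `η`.
-/

open PiTensorProduct

section TensorBasis

variable (k : Type*) [CommRing k] (m : ℕ) (ι : Type*) [Fintype ι]

noncomputable def tensorBasis : Module.Basis (Fin m → ι) k (⨂[k] _ : Fin m, (ι → k)) :=
  Basis.piTensorProduct fun _ => Pi.basisFun k ι

variable {k m ι}

@[simp]
lemma tensorBasis_apply [DecidableEq ι] (b : Fin m → ι) :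
    tensorBasis k m ι b = ⨂ₜ[k] i, Pi.single (b i) 1 := by
  simp [tensorBasis]

@[simp]
lemma tensorBasis_repr_tprod (u : Fin m → ι → k) (c : Fin m → ι) :
    (tensorBasis k m ι).repr (⨂ₜ[k] i, u i) c = ∏ i, u i (c i) := by
  simp [tensorBasis]

lemma prod_single_apply [DecidableEq ι] (b c : Fin m → ι) :
    ∏ i, (Pi.single (b i) (1 : k) : ι → k) (c i) = if b = c then 1 else 0 := by
  rw [← tensorBasis_repr_tprod, ← tensorBasis_apply, Module.Basis.repr_self,
    Finsupp.single_apply]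

lemma map_linearCombination_eq_sum [DecidableEq ι] {V : Type*} [AddCommGroup V] [Module k V]
    (u : ι → V) (y : ⨂[k] _ : Fin m, (ι → k)) :
    map (fun _ => Fintype.linearCombination k u) y
      = ∑ b : Fin m → ι, (tensorBasis k m ι).repr y b • ⨂ₜ[k] i, u (b i) := by
  conv_lhs => rw [← (tensorBasis k m ι).sum_repr y]
  simp [map_tprod]

end TensorBasis

abbrev TensorPowerTrans (k : Type) [CommRing k] (n m : ℕ) : Type 1 :=
  ∀ (V : Type) [AddCommGroup V] [Module k V], (⨂[k] _ : Fin n, V) →ₗ[k] ⨂[k] _ : Fin m, V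

namespace TensorPowerTrans

variable {k : Type} [CommRing k] {n m : ℕ}

def IsNatural (η : TensorPowerTrans k n m) : Prop :=
  ∀ (V W : Type) [AddCommGroup V] [Module k V] [AddCommGroup W] [Module k W] (f : V →ₗ[k] W),
    (η W).comp (map fun _ => f) = (map fun _ => f).comp (η V)

variable (k n) in
noncomputable def univTensor : ⨂[k] _ : Fin n, (Fin n → k) :=
  ⨂ₜ[k] i, Pi.single i 1

noncomputable def coeff (η : TensorPowerTrans k n m) : (Fin m → Fin n) →₀ k :=
  (tensorBasis k m (Fin n)).repr (η (Fin n → k) (univTensor k n))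

lemma map_linearCombination_univTensor {V : Type} [AddCommGroup V] [Module k V]
    (v : Fin n → V) :
    map (fun _ => Fintype.linearCombination k v) (univTensor k n) = ⨂ₜ[k] i, v i := by
  simp [univTensor, map_tprod]

variable {η : TensorPowerTrans k n m}

lemma apply_tprod_eq_map (hη : IsNatural η) {V : Type} [AddCommGroup V] [Module k V]
    (v : Fin n → V) :
    η V (⨂ₜ[k] i, v i)
      = map (fun _ => Fintype.linearCombination k v) (η (Fin n → k) (univTensor k n)) := by
  rw [← map_linearCombination_univTensor]
  exact LinearMap.congr_fun (hη _ _ _) _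

lemma apply_tprod (hη : IsNatural η) {V : Type} [AddCommGroup V] [Module k V] (v : Fin n → V) :
    η V (⨂ₜ[k] i, v i) = ∑ b : Fin m → Fin n, coeff η b • ⨂ₜ[k] i, v (b i) := by
  rw [apply_tprod_eq_map hη, map_linearCombination_eq_sum]
  rfl

lemma ext_of_apply_univTensor (hη : IsNatural η) {η' : TensorPowerTrans k n m}
    (hη' : IsNatural η')
    (h : η (Fin n → k) (univTensor k n) = η' (Fin n → k) (univTensor k n))
    (V : Type) [AddCommGroup V] [Module k V] : η V = η' V := by
  ext v
  simp only [LinearMap.compMultilinearMap_apply, apply_tprod_eq_map hη, apply_tprod_eq_map hη',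
    h]

lemma tensorBasis_repr_apply_tprod (hη : IsNatural η) {ι : Type} [Fintype ι] [DecidableEq ι]
    (u : Fin n → ι → k) (c : Fin m → ι) :
    (tensorBasis k m ι).repr (η (ι → k) (⨂ₜ[k] i, u i)) c
      = ∑ b : Fin m → Fin n, coeff η b * ∏ i, u (b i) (c i) := by
  simp [apply_tprod hη]

lemma coeff_eq_zero_of_not_surjective (hη : IsNatural η) {c : Fin m → Fin n}
    (hc : ¬ Function.Surjective c) : coeff η c = 0 := by
  classical
  obtain ⟨j, hj⟩ : ∃ j, ∀ i, c i ≠ j := by simpa [Function.Surjective] using hc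
  have hfactor : ∀ b : Fin m → Fin n, ∀ i,
      Function.update (fun i => (Pi.single i 1 : Fin n → k)) j 0 (b i) (c i)
        = (Pi.single (b i) (1 : k) : Fin n → k) (c i) := by
    intro b i
    by_cases hb : b i = j
    · simp [hb, Ne.symm (hj i)]
    · simp [hb]
  have h := tensorBasis_repr_apply_tprod hη
    (Function.update (fun i => (Pi.single i 1 : Fin n → k)) j 0) c
  simpa [MultilinearMap.map_update_zero, hfactor, prod_single_apply] using h.symm

lemma coeff_eq_zero_of_not_injective (hη : IsNatural η) {c : Fin m → Fin n}
    (hc : ¬ Function.Injective c) : coeff η c = 0 := by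
  classical
  obtain ⟨i₁, i₂, hc₁₂, hi₁₂⟩ : ∃ i₁ i₂, c i₁ = c i₂ ∧ i₁ ≠ i₂ := by
    simpa [Function.Injective] using hc
  set j := c i₁
  let e : Fin n → Option (Fin n) → k := fun i => Pi.single (some i) 1
  let f : Option (Fin n) → k := Pi.single none 1
  -- Reading slot `i₁` in the extra direction `none` isolates the cross term of the `j`-th factor.
  let c' : Fin m → Option (Fin n) := Function.update (fun i => some (c i)) i₁ none
  have hsum : (⨂ₜ[k] i, Function.update e j (e j + f) i)
      = (⨂ₜ[k] i, e i) + ⨂ₜ[k] i, Function.update e j f i := by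
    rw [MultilinearMap.map_update_add, Function.update_eq_self]
  have h := congrArg (fun y => (tensorBasis k m (Option (Fin n))).repr (η _ y) c') hsum
  simp only [map_add, Finsupp.add_apply, tensorBasis_repr_apply_tprod hη] at h
  have h₁ : ∀ b : Fin m → Fin n, ∀ i, Function.update e j (e j + f) (b i) (c' i)
      = (Pi.single (b i) (1 : k) : Fin n → k) (c i) := by
    intro b i
    by_cases hi : i = i₁
    · subst hi
      by_cases hb : b i = j <;> simp [e, f, c', hb, j]
    · by_cases hb : b i = j <;> simp [e, f, c', hb, hi, Pi.single_apply]
  have h₂ : ∀ b : Fin m → Fin n, ∏ i, e (b i) (c' i) = 0 := fun b =>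
    Finset.prod_eq_zero (Finset.mem_univ i₁) (by simp [e, c'])
  have h₃ : ∀ b : Fin m → Fin n, ∏ i, Function.update e j f (b i) (c' i) = 0 := fun b =>
    Finset.prod_eq_zero (Finset.mem_univ i₂) (by
      by_cases hb : b i₂ = j
      · simp [e, f, c', hb, hi₁₂.symm]
      · simp [e, c', hi₁₂.symm, ← hc₁₂, hb])
  simpa [h₁, h₂, h₃, prod_single_apply] using h

lemma coeff_eq_zero_of_not_bijective (hη : IsNatural η) {c : Fin m → Fin n}
    (hc : ¬ Function.Bijective c) : coeff η c = 0 := by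
  rcases not_and_or.1 hc with h | h
  exacts [coeff_eq_zero_of_not_injective hη h, coeff_eq_zero_of_not_surjective hη h]

lemma eq_zero_of_ne (hη : IsNatural η) (hnm : n ≠ m) (V : Type) [AddCommGroup V] [Module k V] :
    η V = 0 := by
  have hcoeff : coeff η = 0 := Finsupp.ext fun c => coeff_eq_zero_of_not_bijective hη fun hc =>
    hnm (by simpa using (Fintype.card_congr (Equiv.ofBijective c hc)).symm)
  ext v
  simp [apply_tprod hη, hcoeff]

end TensorPowerTrans

section Permutations

variable {k : Type} [Field k] {n : ℕ}

lemma permT_tprod {V : Type} [AddCommGroup V] [Module k V] (σ : Equiv.Perm (Fin n))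
    (v : Fin n → V) : permT k n V σ (⨂ₜ[k] i, v i) = ⨂ₜ[k] i, v (σ.symm i) := by
  simp [permT]

variable (k n) in
noncomputable def permTHom (V : Type) [AddCommGroup V] [Module k V] :
    Equiv.Perm (Fin n) →* Module.End k (⨂[k] _ : Fin n, V) where
  toFun := permT k n V
  map_one' := by
    ext v
    simp [permT_tprod, Equiv.Perm.one_def]
  map_mul' σ τ := by
    ext v
    simp [permT_tprod, Equiv.Perm.mul_def]

lemma permAct_eq_lift (V : Type) [AddCommGroup V] [Module k V]
    (a : MonoidAlgebra k (Equiv.Perm (Fin n))) :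
    permAct k n V a = MonoidAlgebra.lift k _ _ (permTHom k n V) a := by
  rw [MonoidAlgebra.lift_apply]
  rfl

lemma permAct_mul (a b : MonoidAlgebra k (Equiv.Perm (Fin n))) (V : Type) [AddCommGroup V]
    [Module k V] : permAct k n V (a * b) = (permAct k n V a).comp (permAct k n V b) := by
  simp only [permAct_eq_lift, map_mul]
  rfl

lemma isNatural_permAct (a : MonoidAlgebra k (Equiv.Perm (Fin n))) :
    TensorPowerTrans.IsNatural fun (V : Type) [AddCommGroup V] [Module k V] => permAct k n V a := by
  intro V W _ _ _ _ f
  ext v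
  simp [permAct, Finsupp.sum, permT_tprod, map_tprod]

lemma tensorBasis_repr_permAct_univTensor (a : MonoidAlgebra k (Equiv.Perm (Fin n)))
    (τ : Equiv.Perm (Fin n)) :
    (tensorBasis k n (Fin n)).repr (permAct k n _ a (TensorPowerTrans.univTensor k n)) τ
      = a.coeff τ⁻¹ := by
  have hsymm : ∀ σ : Equiv.Perm (Fin n), σ.symm = τ ↔ σ = τ⁻¹ := fun σ => by
    rw [← Equiv.Perm.inv_def, inv_eq_iff_eq_inv]
  simp [permAct, Finsupp.sum, permT_tprod, TensorPowerTrans.univTensor, prod_single_apply, hsymm]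

end Permutations

lemma TensorPowerTrans.exists_unique_permAct {k : Type} [Field k] {n : ℕ}
    {δ : TensorPowerTrans k n n} (hδ : δ.IsNatural) :
    ∃! a : MonoidAlgebra k (Equiv.Perm (Fin n)),
      ∀ (V : Type) [AddCommGroup V] [Module k V], δ V = permAct k n V a := by
  let a : MonoidAlgebra k (Equiv.Perm (Fin n)) :=
    .ofCoeff (Finsupp.equivFunOnFinite.symm fun σ => coeff δ ⇑σ⁻¹)
  refine ⟨a, ext_of_apply_univTensor hδ (isNatural_permAct a) ?_, fun a' ha' => ?_⟩
  · refine (tensorBasis k n (Fin n)).ext_elem fun c => ?_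
    by_cases hc : c.Bijective
    · obtain ⟨τ, rfl⟩ : ∃ τ : Equiv.Perm (Fin n), ⇑τ = c := ⟨.ofBijective c hc, rfl⟩
      rw [tensorBasis_repr_permAct_univTensor]
      simp [a, coeff, Equiv.Perm.inv_def]
    · exact (coeff_eq_zero_of_not_bijective hδ hc).trans
        (coeff_eq_zero_of_not_bijective (isNatural_permAct a) hc).symm
  · ext τ
    rw [← inv_inv τ, ← tensorBasis_repr_permAct_univTensor, ← ha']
    simp [a, coeff]

/-- `Hom(T_n, T_m) = 0` for `n ≠ m`, and `End(T_n) ≅ k(Σ_n)` as a ring: every natural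
transformation `T_n → T_n` is given by a unique element of the group algebra acting by permuting
tensor factors, and this correspondence is multiplicative. -/
theorem stmt1 (k : Type) [Field k] (n m : ℕ)
    (η : ∀ (V : Type) [AddCommGroup V] [Module k V],
        (⨂[k] (i : Fin n), V) →ₗ[k] ⨂[k] (i : Fin m), V)
    (hη : ∀ (V W : Type) [AddCommGroup V] [Module k V] [AddCommGroup W] [Module k W]
        (f : V →ₗ[k] W),
        (η W).comp (PiTensorProduct.map fun _ : Fin n => f)
          = (PiTensorProduct.map fun _ : Fin m => f).comp (η V))
    (δ : ∀ (V : Type) [AddCommGroup V] [Module k V],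
        (⨂[k] (i : Fin n), V) →ₗ[k] ⨂[k] (i : Fin n), V)
    (hδ : ∀ (V W : Type) [AddCommGroup V] [Module k V] [AddCommGroup W] [Module k W]
        (f : V →ₗ[k] W),
        (δ W).comp (PiTensorProduct.map fun _ : Fin n => f)
          = (PiTensorProduct.map fun _ : Fin n => f).comp (δ V)) :
    (n ≠ m → ∀ (V : Type) [AddCommGroup V] [Module k V], η V = 0) ∧
    (∃! a : MonoidAlgebra k (Equiv.Perm (Fin n)),
        ∀ (V : Type) [AddCommGroup V] [Module k V], δ V = permAct k n V a) ∧
    (∀ (a b : MonoidAlgebra k (Equiv.Perm (Fin n))) (V : Type) [AddCommGroup V] [Module k V],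
        permAct k n V (a * b) = (permAct k n V a).comp (permAct k n V b)) :=
  ⟨TensorPowerTrans.eq_zero_of_ne hη, TensorPowerTrans.exists_unique_permAct hδ,
    fun a b V _ _ => permAct_mul a b V⟩
end

section
/- Let Δ_V : T(V) → T(V) ⊗ T(V) be a natural transformation (in V) such that T(V) with the usual tensor-product multiplication and comultiplication Δ_V is a quasi-Hopf algebra (i.e., Δ_V is a counital coalgebra structure making the multiplication a coalgebra map) for every module V over a field k. Then Δ_V equals the canonical comultiplication ψ_V determined by making V primitive. -/
/-!
Fix `v : V` and put `u := Δ (ι v)`. Since `ι (v, v) = ι (v, 0) + ι (0, v)` in `T(V × V)`, naturality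
along the diagonal and the two inclusions `V → V × V`, followed by `T(fst) ⊗ T(snd)`, gives
`u = (id ⊗ π) u + (π ⊗ id) u`, where `π = T(0)` is the projection of `T(V)` onto its scalars.
Hence `u = a ⊗ 1 + 1 ⊗ b`, and the two counit axioms, together with `π (ι v) = 0`, force
`a = b = ι v`. So `Δ` and `ψ` are algebra maps agreeing on `V`.
-/

open TensorProduct

/-- The canonical comultiplication `ψ` on `T(V)` making `V` primitive. -/
noncomputable def psi (k V : Type) [Field k] [AddCommGroup V] [Module k V] :
    TensorAlgebra k V →ₐ[k] TensorAlgebra k V ⊗[k] TensorAlgebra k V :=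
  TensorAlgebra.lift k
    ((Algebra.TensorProduct.includeLeft :
        TensorAlgebra k V →ₐ[k] TensorAlgebra k V ⊗[k] TensorAlgebra k V).toLinearMap.comp
        (TensorAlgebra.ι k) +
      (Algebra.TensorProduct.includeRight :
        TensorAlgebra k V →ₐ[k] TensorAlgebra k V ⊗[k] TensorAlgebra k V).toLinearMap.comp
        (TensorAlgebra.ι k))

/-- The functorial map `T(f) : T(V) → T(W)` induced by a linear map `f : V → W`. -/
noncomputable def Tmap (k : Type) [Field k] {V W : Type} [AddCommGroup V] [Module k V]
    [AddCommGroup W] [Module k W] (f : V →ₗ[k] W) :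
    TensorAlgebra k V →ₐ[k] TensorAlgebra k W :=
  TensorAlgebra.lift k ((TensorAlgebra.ι k).comp f)

section Counit

variable {k A : Type*} [CommSemiring k] [Semiring A] [Algebra k A]

theorem map_ofId_comp_id_apply (η : A →ₐ[k] k) (w : A ⊗[k] A) :
    Algebra.TensorProduct.map ((Algebra.ofId k A).comp η) (AlgHom.id k A) w =
      1 ⊗ₜ TensorProduct.lid k A (LinearMap.rTensor A η.toLinearMap w) := by
  induction w using TensorProduct.induction_on with
  | zero => simp
  | tmul a b => simp [Algebra.algebraMap_eq_smul_one, TensorProduct.smul_tmul]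
  | add w w' hw hw' => simp only [map_add, hw, hw', TensorProduct.tmul_add]

theorem map_id_ofId_comp_apply (η : A →ₐ[k] k) (w : A ⊗[k] A) :
    Algebra.TensorProduct.map (AlgHom.id k A) ((Algebra.ofId k A).comp η) w =
      TensorProduct.rid k A (LinearMap.lTensor A η.toLinearMap w) ⊗ₜ 1 := by
  induction w using TensorProduct.induction_on with
  | zero => simp
  | tmul a b => simp [Algebra.algebraMap_eq_smul_one, TensorProduct.smul_tmul']
  | add w w' hw hw' => simp only [map_add, hw, hw', TensorProduct.add_tmul]

theorem lid_rTensor_map_id_left_apply (ε : A →ₗ[k] k) (π : A →ₐ[k] A) (w : A ⊗[k] A) :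
    TensorProduct.lid k A (LinearMap.rTensor A ε (Algebra.TensorProduct.map (AlgHom.id k A) π w)) =
      π (TensorProduct.lid k A (LinearMap.rTensor A ε w)) := by
  induction w using TensorProduct.induction_on with
  | zero => simp
  | tmul a b => simp
  | add w w' hw hw' => simp only [map_add, hw, hw']

theorem rid_lTensor_map_id_right_apply (ε : A →ₗ[k] k) (π : A →ₐ[k] A) (w : A ⊗[k] A) :
    TensorProduct.rid k A (LinearMap.lTensor A ε (Algebra.TensorProduct.map π (AlgHom.id k A) w)) =
      π (TensorProduct.rid k A (LinearMap.lTensor A ε w)) := by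
  induction w using TensorProduct.induction_on with
  | zero => simp
  | tmul a b => simp
  | add w w' hw hw' => simp only [map_add, hw, hw']

theorem eq_tmul_one_add_one_tmul_of_split (ε η : A →ₐ[k] k) (u : A ⊗[k] A) (x : A)
    (hsplit : u =
      Algebra.TensorProduct.map (AlgHom.id k A) ((Algebra.ofId k A).comp η) u +
        Algebra.TensorProduct.map ((Algebra.ofId k A).comp η) (AlgHom.id k A) u)
    (hl : TensorProduct.lid k A (LinearMap.rTensor A ε.toLinearMap u) = x)
    (hr : TensorProduct.rid k A (LinearMap.lTensor A ε.toLinearMap u) = x)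
    (hx : η x = 0) :
    u = x ⊗ₜ 1 + 1 ⊗ₜ x := by
  have hπx : (Algebra.ofId k A).comp η x = 0 := by simp [hx]
  have hleft : TensorProduct.lid k A (LinearMap.rTensor A η.toLinearMap u) = x := by
    have h := congr_arg (fun w => TensorProduct.lid k A (LinearMap.rTensor A ε.toLinearMap w)) hsplit
    simp only [map_add, lid_rTensor_map_id_left_apply, hl, hπx, map_ofId_comp_id_apply] at h
    simpa using h.symm
  have hright : TensorProduct.rid k A (LinearMap.lTensor A η.toLinearMap u) = x := by
    have h := congr_arg (fun w => TensorProduct.rid k A (LinearMap.lTensor A ε.toLinearMap w)) hsplit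
    simp only [map_add, rid_lTensor_map_id_right_apply, hr, hπx, map_id_ofId_comp_apply] at h
    simpa using h.symm
  rw [hsplit, map_id_ofId_comp_apply, map_ofId_comp_id_apply, hleft, hright]

end Counit

section Tmap

variable (k : Type) [Field k] {V W U : Type} [AddCommGroup V] [Module k V]
  [AddCommGroup W] [Module k W] [AddCommGroup U] [Module k U]

@[simp]
theorem Tmap_ι (f : V →ₗ[k] W) (v : V) :
    Tmap k f (TensorAlgebra.ι k v) = TensorAlgebra.ι k (f v) := by
  simp [Tmap]

theorem Tmap_comp (f : W →ₗ[k] U) (g : V →ₗ[k] W) :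
    Tmap k (f ∘ₗ g) = (Tmap k f).comp (Tmap k g) := by
  ext v
  simp

theorem Tmap_id : Tmap k (LinearMap.id : V →ₗ[k] V) = AlgHom.id k _ := by
  ext v
  simp

theorem Tmap_zero :
    Tmap k (0 : V →ₗ[k] W) = (Algebra.ofId k _).comp TensorAlgebra.algebraMapInv := by
  ext v
  simp [TensorAlgebra.algebraMapInv]

end Tmap

theorem natural_comul_ι_split (k : Type) [Field k] {V : Type} [AddCommGroup V] [Module k V]
    (Δ₁ : TensorAlgebra k V →ₐ[k] TensorAlgebra k V ⊗[k] TensorAlgebra k V)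
    (Δ₂ : TensorAlgebra k (V × V) →ₐ[k] TensorAlgebra k (V × V) ⊗[k] TensorAlgebra k (V × V))
    (hnat : ∀ f : V →ₗ[k] V × V,
      Δ₂.comp (Tmap k f) = (Algebra.TensorProduct.map (Tmap k f) (Tmap k f)).comp Δ₁)
    (v : V) :
    Δ₁ (TensorAlgebra.ι k v) =
      Algebra.TensorProduct.map (AlgHom.id k _)
          ((Algebra.ofId k _).comp TensorAlgebra.algebraMapInv) (Δ₁ (TensorAlgebra.ι k v)) +
        Algebra.TensorProduct.map ((Algebra.ofId k _).comp TensorAlgebra.algebraMapInv)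
          (AlgHom.id k _) (Δ₁ (TensorAlgebra.ι k v)) := by
  set Φ := Algebra.TensorProduct.map (Tmap k (LinearMap.fst k V V)) (Tmap k (LinearMap.snd k V V))
  have hΦ : ∀ f : V →ₗ[k] V × V, Φ (Δ₂ (TensorAlgebra.ι k (f v))) =
      Algebra.TensorProduct.map (Tmap k (LinearMap.fst k V V ∘ₗ f))
        (Tmap k (LinearMap.snd k V V ∘ₗ f)) (Δ₁ (TensorAlgebra.ι k v)) := by
    intro f
    rw [← Tmap_ι, ← AlgHom.comp_apply Δ₂, hnat, Tmap_comp, Tmap_comp,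
      Algebra.TensorProduct.map_comp]
    rfl
  have hdiag : TensorAlgebra.ι k ((LinearMap.id.prod LinearMap.id : V →ₗ[k] V × V) v) =
      TensorAlgebra.ι k (LinearMap.inl k V V v) + TensorAlgebra.ι k (LinearMap.inr k V V v) := by
    rw [← map_add]; simp
  have hsum := congr_arg (fun w => Φ (Δ₂ w)) hdiag
  simp only [map_add, hΦ] at hsum
  simpa [Tmap_id, Tmap_zero, Algebra.TensorProduct.map_id] using hsum

theorem stmt2_general (k : Type) [Field k]
    (Δ : ∀ (V : Type) [AddCommGroup V] [Module k V],
        TensorAlgebra k V →ₐ[k] TensorAlgebra k V ⊗[k] TensorAlgebra k V)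
    (ε : ∀ (V : Type) [AddCommGroup V] [Module k V], TensorAlgebra k V →ₐ[k] k)
    -- naturality of Δ
    (hnat : ∀ (V W : Type) [AddCommGroup V] [Module k V] [AddCommGroup W] [Module k W]
        (f : V →ₗ[k] W),
        (Δ W).comp (Tmap k f) = (Algebra.TensorProduct.map (Tmap k f) (Tmap k f)).comp (Δ V))
    -- counit axioms
    (hcounitl : ∀ (V : Type) [AddCommGroup V] [Module k V],
        (TensorProduct.lid k (TensorAlgebra k V)).toLinearMap.comp
          ((LinearMap.rTensor (TensorAlgebra k V) (ε V).toLinearMap).comp (Δ V).toLinearMap)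
        = LinearMap.id)
    (hcounitr : ∀ (V : Type) [AddCommGroup V] [Module k V],
        (TensorProduct.rid k (TensorAlgebra k V)).toLinearMap.comp
          ((LinearMap.lTensor (TensorAlgebra k V) (ε V).toLinearMap).comp (Δ V).toLinearMap)
        = LinearMap.id) :
    ∀ (V : Type) [AddCommGroup V] [Module k V], Δ V = psi k V := by
  intro V _ _
  ext v
  have hsplit := natural_comul_ι_split k (Δ V) (Δ (V × V)) (hnat V (V × V)) v
  have hprim := eq_tmul_one_add_one_tmul_of_split (ε V) TensorAlgebra.algebraMapInv _ _ hsplit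
    (DFunLike.congr_fun (hcounitl V) _) (DFunLike.congr_fun (hcounitr V) _)
    (by simp [TensorAlgebra.algebraMapInv])
  simpa [psi] using hprim

/-- If `Δ` is a natural comultiplication on `T(V)` which together with the usual multiplication
makes `T(V)` a (coassociative, counital) quasi-Hopf algebra for every `V`, then `Δ = ψ`. -/
theorem stmt2 (k : Type) [Field k]
    (Δ : ∀ (V : Type) [AddCommGroup V] [Module k V],
        TensorAlgebra k V →ₐ[k] TensorAlgebra k V ⊗[k] TensorAlgebra k V)
    (ε : ∀ (V : Type) [AddCommGroup V] [Module k V], TensorAlgebra k V →ₐ[k] k)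
    -- naturality of Δ
    (hnat : ∀ (V W : Type) [AddCommGroup V] [Module k V] [AddCommGroup W] [Module k W]
        (f : V →ₗ[k] W),
        (Δ W).comp (Tmap k f) = (Algebra.TensorProduct.map (Tmap k f) (Tmap k f)).comp (Δ V))
    -- coassociativity
    (hcoassoc : ∀ (V : Type) [AddCommGroup V] [Module k V],
        (Algebra.TensorProduct.assoc k k k (TensorAlgebra k V) (TensorAlgebra k V)
            (TensorAlgebra k V)).toAlgHom.comp
          ((Algebra.TensorProduct.map (Δ V) (AlgHom.id k (TensorAlgebra k V))).comp (Δ V))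
        = (Algebra.TensorProduct.map (AlgHom.id k (TensorAlgebra k V)) (Δ V)).comp (Δ V))
    -- counit axioms
    (hcounitl : ∀ (V : Type) [AddCommGroup V] [Module k V],
        (TensorProduct.lid k (TensorAlgebra k V)).toLinearMap.comp
          ((LinearMap.rTensor (TensorAlgebra k V) (ε V).toLinearMap).comp (Δ V).toLinearMap)
        = LinearMap.id)
    (hcounitr : ∀ (V : Type) [AddCommGroup V] [Module k V],
        (TensorProduct.rid k (TensorAlgebra k V)).toLinearMap.comp
          ((LinearMap.lTensor (TensorAlgebra k V) (ε V).toLinearMap).comp (Δ V).toLinearMap)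
        = LinearMap.id) :
    ∀ (V : Type) [AddCommGroup V] [Module k V], Δ V = psi k V :=
  stmt2_general k Δ ε hnat hcounitl hcounitr
end

section
/- Let V̄_n be the n-dimensional k-vector space with basis x_1,…,x_n, with right Σ_n-action x_i·σ = x_{σ(i)}, and let d_i : V̄_n → V̄_{n-1} be the linear map sending x_j to x_j for j < i, to 0 for j = i, and to x_{j-1} for j > i. For a functor B from k-modules to k-modules define γ_n(B) = ∩_{i=1}^n Ker(B(d_i) : B(V̄_n) → B(V̄_{n-1})). Then for any short exact sequence of functors A ↪ B ↠ C (exact objectwise), the induced sequence γ_n(A) ↪ γ_n(B) ↠ γ_n(C) is a short exact sequence of k(Σ_n)-modules; i.e., γ_n is an exact functor. -/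
open CategoryTheory

/-- The `n`-dimensional space `V̄_n = k^n` with basis `x_1, …, x_n`, as an object of
`ModuleCat k`. -/
noncomputable def Vbar (k : Type) [Field k] (n : ℕ) : ModuleCat k :=
  ModuleCat.of k (Fin n → k)

/-- The face map `d_i : V̄_{n+1} → V̄_n` sending `x_j ↦ x_j` for `j < i`, `x_i ↦ 0` and
`x_j ↦ x_{j-1}` for `j > i`; in coordinates it is precomposition with `Fin.succAbove i`. -/
noncomputable def dmap (k : Type) [Field k] (n : ℕ) (i : Fin (n + 1)) :
    Vbar k (n + 1) ⟶ Vbar k n :=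
  ModuleCat.ofHom (LinearMap.funLeft k k (Fin.succAbove i))

/-- The basis-permutation map `x_j ↦ x_{σ(j)}` on `V̄_{n+1}` for `σ ∈ Σ_{n+1}`. -/
noncomputable def permV (k : Type) [Field k] (n : ℕ) (σ : Equiv.Perm (Fin (n + 1))) :
    Vbar k (n + 1) ⟶ Vbar k (n + 1) :=
  ModuleCat.ofHom (LinearMap.funLeft k k ⇑σ.symm)

/-- `γ_{n+1}(B) = ∩_i Ker(B(d_i)) ⊆ B(V̄_{n+1})` for a functor `B` on `k`-modules. -/
noncomputable def gammaF (k : Type) [Field k] (n : ℕ) (B : ModuleCat k ⥤ ModuleCat k) :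
    Submodule k (B.obj (Vbar k (n + 1))) :=
  ⨅ i : Fin (n + 1), LinearMap.ker (B.map (dmap k n i)).hom

/-!
Each face map `d_i` has the section `s_i` inserting a zero `i`-th coordinate, and the
idempotents `e_i = s_i ∘ d_i` (zeroing the `i`-th coordinate) commute. Since
`Ker B(d_i) = Ker B(e_i)`, the element `∏ᵢ (1 - B(e_i)) b` lies in `γ(B)`, and it is natural
in `B`; so a preimage in `B` of an element of `γ(C)` can be corrected into `γ(B)`. Injectivity
and exactness in the middle are formal, and `Σ_n`-invariance holds because `d_i ∘ σ` factors
through `d_{σ⁻¹ i}`.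
-/

section CommutingIdempotents

variable {R M N ι : Type*} [Ring R] [AddCommGroup M] [Module R M] [AddCommGroup N] [Module R N]
  {T : ι → Module.End R M} {T' : ι → Module.End R N} {g : M →ₗ[R] N}

/-- Replacing `b` by `(1 - T a) b` kills `T a` without disturbing the other `T i b = 0`
(the `T i` commute) nor the image `g b` (as `T' a (g b) = 0`). -/
theorem exists_forall_apply_eq_zero_of_commute (hidem : ∀ i, IsIdempotentElem (T i))
    (hcomm : ∀ i j, Commute (T i) (T j)) (hg : ∀ i, g ∘ₗ T i = T' i ∘ₗ g) (s : Finset ι)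
    (b : M) (hb : ∀ i ∈ s, T' i (g b) = 0) :
    ∃ b', (∀ i ∈ s, T i b' = 0) ∧ g b' = g b := by
  classical
  induction s using Finset.induction_on with
  | empty => exact ⟨b, by simp, rfl⟩
  | insert a s _ ih =>
    obtain ⟨b', hb's, hb'g⟩ := ih fun i hi => hb i (Finset.mem_insert_of_mem hi)
    refine ⟨(1 - T a) b', ?_, ?_⟩
    · intro i hi
      rcases Finset.mem_insert.1 hi with rfl | hi
      · rw [← Module.End.mul_apply, mul_sub, mul_one, hidem i, sub_self, LinearMap.zero_apply]
      · rw [← Module.End.mul_apply, ((Commute.one_right _).sub_right (hcomm i a)).eq,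
          Module.End.mul_apply, hb's i hi, map_zero]
    · rw [LinearMap.sub_apply, Module.End.one_apply, map_sub, ← LinearMap.comp_apply, hg,
        LinearMap.comp_apply, hb'g, hb a (Finset.mem_insert_self a s), sub_zero]

theorem Submodule.map_iInf_ker_eq_of_commute [Finite ι] (hidem : ∀ i, IsIdempotentElem (T i))
    (hcomm : ∀ i j, Commute (T i) (T j)) (hg : ∀ i, g ∘ₗ T i = T' i ∘ₗ g)
    (hsurj : Function.Surjective g) :
    (⨅ i, LinearMap.ker (T i)).map g = ⨅ i, LinearMap.ker (T' i) := by
  have := Fintype.ofFinite ι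
  apply le_antisymm
  · rintro _ ⟨b, hb, rfl⟩
    simp only [SetLike.mem_coe, Submodule.mem_iInf, LinearMap.mem_ker] at hb ⊢
    intro i
    rw [← LinearMap.comp_apply, ← hg, LinearMap.comp_apply, hb i, map_zero]
  · intro c hc
    simp only [Submodule.mem_iInf, LinearMap.mem_ker] at hc
    obtain ⟨b, rfl⟩ := hsurj c
    obtain ⟨b', hb', hb'g⟩ :=
      exists_forall_apply_eq_zero_of_commute hidem hcomm hg Finset.univ b fun i _ => hc i
    refine ⟨b', ?_, hb'g⟩
    simpa only [SetLike.mem_coe, Submodule.mem_iInf, LinearMap.mem_ker] using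
      fun i => hb' i (Finset.mem_univ i)

end CommutingIdempotents

namespace CategoryTheory.Functor

variable {C : Type*} [Category C] {R : Type*} [Ring R] {F G H : C ⥤ ModuleCat R}
  {ι : Type*} {X : C} {Y : ι → C}

theorem ker_map_eq_ker_map_comp_of_comp_eq_id {Y : C} (d : X ⟶ Y) (s : Y ⟶ X)
    (hs : s ≫ d = 𝟙 Y) : LinearMap.ker (F.map d).hom = LinearMap.ker (F.map (d ≫ s)).hom := by
  apply le_antisymm
  · intro x hx
    rw [LinearMap.mem_ker] at hx ⊢
    rw [F.map_comp, ModuleCat.hom_comp, LinearMap.comp_apply, hx, map_zero]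
  · intro x hx
    rw [LinearMap.mem_ker] at hx ⊢
    rw [← Category.comp_id d, ← hs, ← Category.assoc, F.map_comp, ModuleCat.hom_comp,
      LinearMap.comp_apply, hx, map_zero]

theorem map_app_iInf_ker_map_le (η : F ⟶ G) (f : ∀ i, X ⟶ Y i) :
    (⨅ i, LinearMap.ker (F.map (f i)).hom).map (η.app X).hom ≤
      ⨅ i, LinearMap.ker (G.map (f i)).hom := by
  rintro _ ⟨x, hx, rfl⟩
  simp only [SetLike.mem_coe, Submodule.mem_iInf, LinearMap.mem_ker] at hx ⊢
  intro i
  rw [← NatTrans.naturality_apply η (f i) x, hx i, map_zero]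

theorem map_app_iInf_ker_map_eq_inf_ker (j : F ⟶ G) (p : G ⟶ H) (f : ∀ i, X ⟶ Y i)
    (hinj : ∀ i, Function.Injective (j.app (Y i)))
    (hexact : LinearMap.range (j.app X).hom = LinearMap.ker (p.app X).hom) :
    (⨅ i, LinearMap.ker (F.map (f i)).hom).map (j.app X).hom =
      (⨅ i, LinearMap.ker (G.map (f i)).hom) ⊓ LinearMap.ker (p.app X).hom := by
  apply le_antisymm
  · refine le_inf (map_app_iInf_ker_map_le j f) ?_
    rw [← hexact]
    exact LinearMap.map_le_range
  · rintro _ ⟨hxγ, hxp⟩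
    obtain ⟨a, rfl⟩ : _ ∈ LinearMap.range (j.app X).hom := hexact ▸ hxp
    refine ⟨a, ?_, rfl⟩
    simp only [SetLike.mem_coe, Submodule.mem_iInf, LinearMap.mem_ker] at hxγ ⊢
    intro i
    apply hinj i
    rw [map_zero, ← hxγ i]
    exact NatTrans.naturality_apply j (f i) a

theorem map_app_iInf_ker_map_eq_of_comp_eq_id [Finite ι] (p : G ⟶ H) (f : ∀ i, X ⟶ Y i)
    (s : ∀ i, Y i ⟶ X) (hs : ∀ i, s i ≫ f i = 𝟙 (Y i))
    (hcomm : ∀ i i', (f i ≫ s i) ≫ f i' ≫ s i' = (f i' ≫ s i') ≫ f i ≫ s i)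
    (hsurj : Function.Surjective (p.app X)) :
    (⨅ i, LinearMap.ker (G.map (f i)).hom).map (p.app X).hom =
      ⨅ i, LinearMap.ker (H.map (f i)).hom := by
  simp only [ker_map_eq_ker_map_comp_of_comp_eq_id (f _) (s _) (hs _)]
  refine Submodule.map_iInf_ker_eq_of_commute (fun i => ?_) (fun i i' => ?_)
    (fun i => ?_) hsurj
  · rw [IsIdempotentElem, Module.End.mul_eq_comp, ← ModuleCat.hom_comp, ← G.map_comp,
      Category.assoc, reassoc_of% hs i]
  · rw [Commute, SemiconjBy, Module.End.mul_eq_comp, Module.End.mul_eq_comp,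
      ← ModuleCat.hom_comp, ← ModuleCat.hom_comp, ← G.map_comp, ← G.map_comp, hcomm]
  · rw [← ModuleCat.hom_comp, ← ModuleCat.hom_comp, p.naturality]

end CategoryTheory.Functor

section FaceMaps

variable (k : Type) [Field k] (n : ℕ)

noncomputable def smap (i : Fin (n + 1)) : Vbar k n ⟶ Vbar k (n + 1) :=
  ModuleCat.ofHom
    { toFun := fun w => Fin.insertNth i 0 w
      map_add' := fun v w => by rw [← Fin.insertNth_add, add_zero]
      map_smul' := fun c w => Fin.insertNth_eq_iff.2 ⟨by simp, by ext; simp [Fin.removeNth]⟩ }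

variable {k n}

theorem smap_comp_dmap (i : Fin (n + 1)) : smap k n i ≫ dmap k n i = 𝟙 (Vbar k n) := by
  ext (w : Fin n → k)
  funext j
  exact Fin.insertNth_apply_succAbove (α := fun _ => k) i 0 w j

theorem dmap_comp_smap_apply (i : Fin (n + 1)) (v : Fin (n + 1) → k) :
    (dmap k n i ≫ smap k n i).hom v = Function.update v i 0 :=
  Fin.insertNth_removeNth i 0 v

theorem dmap_comp_smap_comm (i i' : Fin (n + 1)) :
    (dmap k n i ≫ smap k n i) ≫ dmap k n i' ≫ smap k n i' =
      (dmap k n i' ≫ smap k n i') ≫ dmap k n i ≫ smap k n i := by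
  ext (v : Fin (n + 1) → k)
  change (dmap k n i' ≫ smap k n i').hom ((dmap k n i ≫ smap k n i).hom v) =
    (dmap k n i ≫ smap k n i).hom ((dmap k n i' ≫ smap k n i').hom v)
  simp only [dmap_comp_smap_apply]
  rcases eq_or_ne i i' with rfl | h
  · rfl
  · exact Function.update_comm h 0 0 v

end FaceMaps

section Permutations

variable {k : Type} [Field k] {n : ℕ}

theorem dmap_comp_smap_comp_permV_comp_dmap (σ : Equiv.Perm (Fin (n + 1))) (i : Fin (n + 1)) :
    (dmap k n (σ.symm i) ≫ smap k n (σ.symm i)) ≫ permV k n σ ≫ dmap k n i =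
      permV k n σ ≫ dmap k n i := by
  ext (v : Fin (n + 1) → k)
  funext x
  change (dmap k n (σ.symm i) ≫ smap k n (σ.symm i)).hom v (σ.symm (i.succAbove x)) =
    v (σ.symm (i.succAbove x))
  rw [dmap_comp_smap_apply, Function.update_of_ne]
  exact fun h => Fin.succAbove_ne i x (σ.symm.injective h)

theorem permV_inv_comp_permV (σ : Equiv.Perm (Fin (n + 1))) :
    permV k n σ⁻¹ ≫ permV k n σ = 𝟙 (Vbar k (n + 1)) := by
  ext (v : Fin (n + 1) → k)
  funext x
  change v (σ⁻¹.symm (σ.symm x)) = v x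
  rw [Equiv.Perm.inv_def, Equiv.symm_symm, Equiv.apply_symm_apply]

/-- `d_i ∘ σ` factors through `d_{σ⁻¹ i}`, as it kills the idempotent `s ∘ d` at `σ⁻¹ i`. -/
theorem map_permV_gammaF_le (F : ModuleCat k ⥤ ModuleCat k) (σ : Equiv.Perm (Fin (n + 1))) :
    (gammaF k n F).map (F.map (permV k n σ)).hom ≤ gammaF k n F := by
  rintro _ ⟨x, hx, rfl⟩
  simp only [gammaF, SetLike.mem_coe, Submodule.mem_iInf, LinearMap.mem_ker] at hx ⊢
  intro i
  have hx' : (F.map (dmap k n (σ.symm i) ≫ smap k n (σ.symm i))).hom x = 0 := by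
    rw [← LinearMap.mem_ker, ← Functor.ker_map_eq_ker_map_comp_of_comp_eq_id _ _
      (smap_comp_dmap _)]
    exact hx _
  rw [← LinearMap.comp_apply, ← ModuleCat.hom_comp, ← F.map_comp,
    ← dmap_comp_smap_comp_permV_comp_dmap σ i, F.map_comp, ModuleCat.hom_comp,
    LinearMap.comp_apply, hx', map_zero]

theorem map_permV_gammaF (F : ModuleCat k ⥤ ModuleCat k) (σ : Equiv.Perm (Fin (n + 1))) :
    (gammaF k n F).map (F.map (permV k n σ)).hom = gammaF k n F := by
  refine le_antisymm (map_permV_gammaF_le F σ) ?_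
  calc gammaF k n F
      = ((gammaF k n F).map (F.map (permV k n σ⁻¹)).hom).map (F.map (permV k n σ)).hom := by
        rw [← Submodule.map_comp, ← ModuleCat.hom_comp, ← F.map_comp, permV_inv_comp_permV,
          F.map_id, ModuleCat.hom_id, Submodule.map_id]
    _ ≤ (gammaF k n F).map (F.map (permV k n σ)).hom :=
        Submodule.map_mono (map_permV_gammaF_le F σ⁻¹)

end Permutations

/-- `γ_n` is an exact functor: a short exact sequence of functors `A ↪ B ↠ C` (objectwise exact)
induces a short exact sequence `γ_n(A) ↪ γ_n(B) ↠ γ_n(C)` of `k(Σ_n)`-modules (the `Σ_n`-module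
structure being induced by permuting the basis of `V̄_n`, which each `γ_n` is invariant under). -/
theorem stmt4 (k : Type) [Field k] (n : ℕ)
    (A B C : ModuleCat k ⥤ ModuleCat k) (j : A ⟶ B) (p : B ⟶ C)
    (hinj : ∀ V : ModuleCat k, Function.Injective (j.app V))
    (hsurj : ∀ V : ModuleCat k, Function.Surjective (p.app V))
    (hexact : ∀ V : ModuleCat k, LinearMap.range (j.app V).hom = LinearMap.ker (p.app V).hom) :
    -- the Σ_{n+1}-module structure: each γ is invariant under the permutation action
    (∀ (F : ModuleCat k ⥤ ModuleCat k) (σ : Equiv.Perm (Fin (n + 1))),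
        Submodule.map (F.map (permV k n σ)).hom (gammaF k n F) = gammaF k n F) ∧
    -- γ(j) is injective with image landing in γ(B)
    Function.Injective (j.app (Vbar k (n + 1))) ∧
    Submodule.map (j.app (Vbar k (n + 1))).hom (gammaF k n A) ≤ gammaF k n B ∧
    -- exactness at γ(B)
    Submodule.map (j.app (Vbar k (n + 1))).hom (gammaF k n A)
      = gammaF k n B ⊓ LinearMap.ker (p.app (Vbar k (n + 1))).hom ∧
    -- γ(p) is surjective onto γ(C)
    Submodule.map (p.app (Vbar k (n + 1))).hom (gammaF k n B) = gammaF k n C :=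
  ⟨map_permV_gammaF, hinj _, Functor.map_app_iInf_ker_map_le j (dmap k n),
    Functor.map_app_iInf_ker_map_eq_inf_ker j p (dmap k n) (fun _ => hinj _) (hexact _),
    Functor.map_app_iInf_ker_map_eq_of_comp_eq_id p (dmap k n) (smap k n)
      smap_comp_dmap dmap_comp_smap_comm (hsurj _)⟩
end
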